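/- For every real constant c and every integer n ≥ 2, the rational Ruijsenaars–Schneider function F(u) = c − 1/u² (defined for real u ≠ 0) satisfies the classical functional equation: T_n(F, x) = 0 for all pairwise distinct real x₁, …, xₙ. -/

import Mathlib

open Polynomial Finset

variable {ι : Type*} [DecidableEq ι]

lemma basis_coeff (s : Finset ι) (v : ι → ℝ) (i : ι) (hvs : Set.InjOn v s) (hi : i ∈ s) :
    (Lagrange.basis s v i).coeff (#s - 1) = ∏ m ∈ s.erase i, (v i - v m)⁻¹ := by
  rw [← Lagrange.natDegree_basis hvs hi, coeff_natDegree]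
  unfold Lagrange.basis
  rw [leadingCoeff_prod]
  refine Finset.prod_congr rfl fun m hm => ?_
  unfold Lagrange.basisDivisor
  rw [leadingCoeff_mul, leadingCoeff_C, leadingCoeff_X_sub_C, mul_one]

lemma lagrange_sum_zero {s : Finset ι} {v : ι → ℝ} (hvs : Set.InjOn v s)
    (f : ℝ[X]) (hd : f.degree < ((#s - 1 : ℕ) : WithBot ℕ)) :
    ∑ k ∈ s, f.eval (v k) * (∏ m ∈ s.erase k, (v k - v m))⁻¹ = 0 := by
  have hlt : f.degree < (#s : WithBot ℕ) :=
    lt_of_lt_of_le hd (by exact_mod_cast Nat.sub_le _ _)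
  have hfi := Lagrange.eq_interpolate hvs hlt
  have h0 : f.coeff (#s - 1) = 0 := coeff_eq_zero_of_degree_lt hd
  rw [hfi, Lagrange.interpolate_apply, finset_sum_coeff] at h0
  rw [← h0]
  refine Finset.sum_congr rfl fun k hk => ?_
  rw [coeff_C_mul, basis_coeff s v k hvs hk, Finset.prod_inv_distrib]
open Polynomial Finset

variable {ι : Type*} [DecidableEq ι]

lemma master_identity {s : Finset ι} {v : ι → ℝ} (hvs : Set.InjOn v s)
    {j : ι} (hj : j ∈ s) (h2 : 2 ≤ #s) :
    (∏ m ∈ s.erase j, (v j - v m)) *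
      ∑ k ∈ s.erase j, ((v j - v k)⁻¹ * (∏ m ∈ s.erase k, (v k - v m))⁻¹) =
    - ∑ k ∈ s.erase j, (v j - v k)⁻¹ := by
  classical
  set ej : ℝ := ∏ m ∈ s.erase j, (v j - v m) with hej
  have hne : ∀ {k}, k ∈ s.erase j → v j - v k ≠ 0 := by
    intro k hk
    have hks := Finset.mem_of_mem_erase hk
    have hkj : k ≠ j := Finset.ne_of_mem_erase hk
    exact sub_ne_zero.mpr fun h => hkj (hvs hks hj h.symm)
  have hejne : ej ≠ 0 := Finset.prod_ne_zero_iff.mpr fun m hm => hne hm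
  -- the polynomial r
  set q : ℝ[X] := Lagrange.nodal (s.erase j) v with hq
  have hqj : q.eval (v j) = ej := by rw [hq, Lagrange.eval_nodal]
  obtain ⟨r, hr⟩ : (X - C (v j)) ∣ (q - C ej) := by
    rw [← hqj]; exact X_sub_C_dvd_sub_C_eval
  -- degree facts
  have hcard : #(s.erase j) = #s - 1 := Finset.card_erase_of_mem hj
  have hpos : 0 < #(s.erase j) := by omega
  have hqdeg : q.degree = (#(s.erase j) : WithBot ℕ) := Lagrange.degree_nodal
  have hgdeg : (q - C ej).degree = (#(s.erase j) : WithBot ℕ) := by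
    rw [sub_eq_add_neg, ← C_neg]
    rw [degree_add_C]
    · exact hqdeg
    · rw [hqdeg]; exact_mod_cast hpos
  have hrne : r ≠ 0 := by
    intro h0
    rw [h0, mul_zero] at hr
    rw [hr, degree_zero] at hgdeg
    exact (by simp : ¬ (⊥ : WithBot ℕ) = (#(s.erase j) : WithBot ℕ)) hgdeg
  have hrdeg : r.degree < ((#s - 1 : ℕ) : WithBot ℕ) := by
    have : (q - C ej).degree = 1 + r.degree := by
      rw [hr, degree_mul, degree_X_sub_C]
    rw [hgdeg, hcard] at this
    rw [degree_eq_natDegree hrne] at this ⊢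
    have : ((#s - 1 : ℕ) : WithBot ℕ) = ((1 + r.natDegree : ℕ) : WithBot ℕ) := by
      rw [this]; push_cast; ring
    have h' : #s - 1 = 1 + r.natDegree := by exact_mod_cast this
    exact_mod_cast (by omega : r.natDegree < #s - 1)
  -- evaluations of r
  have hrk : ∀ k ∈ s.erase j, r.eval (v k) = ej * (v j - v k)⁻¹ := by
    intro k hk
    have h1 : q.eval (v k) = 0 := Lagrange.eval_nodal_at_node hk
    have h2 : (q - C ej).eval (v k) = (v k - v j) * r.eval (v k) := by
      rw [hr]; simp
    rw [eval_sub, h1, eval_C, zero_sub] at h2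
    have hvk := hne hk
    field_simp at h2 ⊢
    linarith [h2]
  have hrj : r.eval (v j) = ej * ∑ k ∈ s.erase j, (v j - v k)⁻¹ := by
    have hd : derivative (q - C ej) = r + (X - C (v j)) * derivative r := by
      rw [hr, derivative_mul]; simp only [derivative_sub, derivative_X, derivative_C, sub_zero, one_mul]
    have h1 : (derivative (q - C ej)).eval (v j) = r.eval (v j) := by
      rw [hd]; simp
    have h2 : derivative (q - C ej) = derivative q := by simp
    rw [h2] at h1
    rw [← h1, hq, Lagrange.derivative_nodal]
    rw [eval_finset_sum, Finset.mul_sum]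
    refine Finset.sum_congr rfl fun k hk => ?_
    rw [Lagrange.eval_nodal]
    rw [hej, ← Finset.mul_prod_erase (s.erase j) _ hk]
    field_simp [hne hk]
  -- apply Lagrange sum
  have hA := lagrange_sum_zero hvs r hrdeg
  rw [← Finset.add_sum_erase s _ hj] at hA
  rw [hrj] at hA
  have hA2 : ∑ k ∈ s.erase j, r.eval (v k) * (∏ m ∈ s.erase k, (v k - v m))⁻¹
      = ej * ∑ k ∈ s.erase j, ((v j - v k)⁻¹ * (∏ m ∈ s.erase k, (v k - v m))⁻¹) := by
    rw [Finset.mul_sum]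
    refine Finset.sum_congr rfl fun k hk => ?_
    rw [hrk k hk]; ring
  rw [hA2] at hA
  have : ej * (∑ k ∈ s.erase j, (v j - v k)⁻¹) * ej⁻¹ = ∑ k ∈ s.erase j, (v j - v k)⁻¹ := by
    field_simp
  rw [this] at hA
  linarith [hA]
lemma aux_inv_calc (a b c : ℝ) (ha : a ≠ 0) :
    (a^2)⁻¹ * (a * (b⁻¹ * c⁻¹)) = a⁻¹ * c⁻¹ * b⁻¹ := by
  rw [sq, mul_inv, mul_assoc a⁻¹, ← mul_assoc a⁻¹ a, inv_mul_cancel₀ ha, one_mul]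
  ring

lemma core_identity {s : Finset ι} {v : ι → ℝ} (hvs : Set.InjOn v s) :
    ∑ j ∈ s, ∑ l ∈ s.erase j,
      ((v j - v l) ^ 3)⁻¹ * ∏ m ∈ (s.erase j).erase l, ((v j - v m) ^ 2)⁻¹ = 0 := by
  classical
  have hne : ∀ {j k}, j ∈ s → k ∈ s.erase j → v j - v k ≠ 0 := by
    intro j k hj hk
    exact sub_ne_zero.mpr fun h =>
      (Finset.ne_of_mem_erase hk) (hvs (Finset.mem_of_mem_erase hk) hj h.symm)
  have hejne : ∀ {j}, j ∈ s → (∏ m ∈ s.erase j, (v j - v m)) ≠ 0 := fun {j} hj =>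
    Finset.prod_ne_zero_iff.mpr fun m hm => hne hj hm
  -- rewrite inner term
  have step1 : ∀ j ∈ s, ∑ l ∈ s.erase j,
      ((v j - v l) ^ 3)⁻¹ * ∏ m ∈ (s.erase j).erase l, ((v j - v m) ^ 2)⁻¹
      = ((∏ m ∈ s.erase j, (v j - v m))^2)⁻¹ * ∑ l ∈ s.erase j, (v j - v l)⁻¹ := by
    intro j hj
    rw [Finset.mul_sum]
    refine Finset.sum_congr rfl fun l hl => ?_
    have h1 : (v j - v l)^2 * ∏ m ∈ (s.erase j).erase l, ((v j - v m) ^ 2)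
        = (∏ m ∈ s.erase j, (v j - v m))^2 := by
      rw [Finset.mul_prod_erase (s.erase j) (fun m => (v j - v m)^2) hl,
        Finset.prod_pow]
    have h2 : ∏ m ∈ (s.erase j).erase l, ((v j - v m) ^ 2)⁻¹
        = (∏ m ∈ (s.erase j).erase l, (v j - v m) ^ 2)⁻¹ := by
      rw [Finset.prod_inv_distrib]
    rw [h2, ← h1]
    have hjl := hne hj hl
    have hprodne : (∏ m ∈ (s.erase j).erase l, (v j - v m) ^ 2) ≠ 0 :=
      Finset.prod_ne_zero_iff.mpr fun m hm =>
        pow_ne_zero _ (hne hj (Finset.mem_of_mem_erase hm))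
    field_simp
  rw [Finset.sum_congr rfl step1]
  -- apply master identity
  have step2 : ∀ j ∈ s,
      ((∏ m ∈ s.erase j, (v j - v m))^2)⁻¹ * ∑ l ∈ s.erase j, (v j - v l)⁻¹
      = - ∑ k ∈ s.erase j, ((∏ m ∈ s.erase j, (v j - v m))⁻¹ *
          (∏ m ∈ s.erase k, (v k - v m))⁻¹ * (v j - v k)⁻¹) := by
    intro j hj
    by_cases h2 : 2 ≤ #s
    · have hB := master_identity hvs hj h2
      set ej := ∏ m ∈ s.erase j, (v j - v m)
      have : ∑ l ∈ s.erase j, (v j - v l)⁻¹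
          = - (ej * ∑ k ∈ s.erase j, ((v j - v k)⁻¹ * (∏ m ∈ s.erase k, (v k - v m))⁻¹)) := by
        rw [hB]; ring
      rw [this, mul_neg, neg_inj, Finset.mul_sum, Finset.mul_sum]
      refine Finset.sum_congr rfl fun k hk => ?_
      exact aux_inv_calc ej (v j - v k) (∏ m ∈ s.erase k, (v k - v m)) (hejne hj)
    · have : s.erase j = ∅ := by
        have := Finset.card_erase_of_mem hj
        have h1 : #(s.erase j) = 0 := by omega
        exact Finset.card_eq_zero.mp h1
      rw [this]; simp
  rw [Finset.sum_congr rfl step2]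
  -- antisymmetry
  rw [Finset.sum_neg_distrib, neg_eq_zero]
  have diag : ∀ j ∈ s, ∑ k ∈ s.erase j, ((∏ m ∈ s.erase j, (v j - v m))⁻¹ *
      (∏ m ∈ s.erase k, (v k - v m))⁻¹ * (v j - v k)⁻¹)
      = ∑ k ∈ s, ((∏ m ∈ s.erase j, (v j - v m))⁻¹ *
      (∏ m ∈ s.erase k, (v k - v m))⁻¹ * (v j - v k)⁻¹) := by
    intro j hj
    rw [Finset.sum_erase]
    simp
  rw [Finset.sum_congr rfl diag]
  set g : ι → ι → ℝ := fun j k => (∏ m ∈ s.erase j, (v j - v m))⁻¹ *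
      (∏ m ∈ s.erase k, (v k - v m))⁻¹ * (v j - v k)⁻¹ with hg
  have hanti : ∀ j k, g j k = - g k j := by
    intro j k
    rw [hg]
    simp only []
    rw [show v k - v j = -(v j - v k) by ring]
    rw [inv_neg]
    ring
  have : ∑ j ∈ s, ∑ k ∈ s, g j k = - ∑ j ∈ s, ∑ k ∈ s, g j k := by
    nth_rewrite 1 [Finset.sum_comm]
    rw [← Finset.sum_neg_distrib]
    refine Finset.sum_congr rfl fun k _ => ?_
    rw [← Finset.sum_neg_distrib]
    exact Finset.sum_congr rfl fun j _ => hanti j k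
  have hzero : ∑ j ∈ s, ∑ k ∈ s, g j k = 0 := by linarith
  exact hzero
/-- The classical sum `T_n(F, x) = ∑_j ∑_{l ≠ j} F′(x_j − x_l) ∏_{m ≠ j,l} F(x_j − x_m)`. -/
noncomputable def classicalSumR (F : ℝ → ℝ) (n : ℕ) (x : Fin n → ℝ) : ℝ :=
  ∑ j : Fin n, ∑ l ∈ Finset.univ.erase j,
    deriv F (x j - x l) * ∏ m ∈ (Finset.univ.erase j).erase l, F (x j - x m)

lemma deriv_RS (c : ℝ) (u : ℝ) (hu : u ≠ 0) :
    deriv (fun u : ℝ => c - 1 / u ^ 2) u = 2 * (u ^ 3)⁻¹ := by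
  have h1 : HasDerivAt (fun u : ℝ => u ^ 2) (2 * u) u := by
    simpa using hasDerivAt_pow 2 u
  have h2 := h1.inv (pow_ne_zero 2 hu)
  have h3 := (hasDerivAt_const u c).sub h2
  have h4 : HasDerivAt (fun u : ℝ => c - 1 / u ^ 2) (0 - -(2 * u) / (u ^ 2) ^ 2) u := by
    have h3' : HasDerivAt (fun u : ℝ => c - (u ^ 2)⁻¹) _ u := h3
    simpa [one_div] using h3'
  rw [h4.deriv]
  field_simp
  ring

theorem classicalSum_rational_RS (c : ℝ) (n : ℕ) (hn : 2 ≤ n) (x : Fin n → ℝ)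
    (hx : Function.Injective x) :
    classicalSumR (fun u => c - 1 / u ^ 2) n x = 0 := by
  classical
  unfold classicalSumR
  have hd : ∀ j l : Fin n, l ∈ Finset.univ.erase j → x j - x l ≠ 0 := by
    intro j l hl
    exact sub_ne_zero.mpr fun h => (Finset.ne_of_mem_erase hl) (hx h.symm)
  set G : Fin n → Fin n → Finset (Fin n) → ℝ := fun j l t =>
    2 * ((x j - x l) ^ 3)⁻¹ *
      ((∏ m ∈ t, -(((x j - x m) ^ 2)⁻¹)) * c ^ (n - 2 - #t)) with hG
  -- Step 1: rewrite each (j,l) term via deriv and expansion in powers of c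
  have step1 : ∀ j : Fin n, ∀ l ∈ Finset.univ.erase j,
      deriv (fun u : ℝ => c - 1 / u ^ 2) (x j - x l) *
        ∏ m ∈ (Finset.univ.erase j).erase l, (fun u : ℝ => c - 1 / u ^ 2) (x j - x m)
      = ∑ t ∈ ((Finset.univ.erase j).erase l).powerset, G j l t := by
    intro j l hl
    rw [deriv_RS c _ (hd j l hl)]
    have hE : #((Finset.univ.erase j).erase l) = n - 2 := by
      rw [Finset.card_erase_of_mem hl, Finset.card_erase_of_mem (Finset.mem_univ j)]
      simp only [Finset.card_univ, Fintype.card_fin]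
      omega
    have hprod : ∏ m ∈ (Finset.univ.erase j).erase l, (fun u : ℝ => c - 1 / u ^ 2) (x j - x m)
        = ∑ t ∈ ((Finset.univ.erase j).erase l).powerset,
            (∏ m ∈ t, -(((x j - x m) ^ 2)⁻¹)) * c ^ (n - 2 - #t) := by
      have h0 : ∀ m, (fun u : ℝ => c - 1 / u ^ 2) (x j - x m)
          = -(((x j - x m) ^ 2)⁻¹) + c := by
        intro m; simp [one_div]; ring
      rw [Finset.prod_congr rfl fun m _ => h0 m]
      rw [Finset.prod_add]
      refine Finset.sum_congr rfl fun t ht => ?_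
      rw [Finset.prod_const]
      congr 1
      rw [Finset.card_sdiff_of_subset (Finset.mem_powerset.mp ht), hE]
    rw [hprod, Finset.mul_sum]
  rw [Finset.sum_congr rfl fun j _ => Finset.sum_congr rfl (step1 j)]
  -- Step 2: reindex inner powerset sum by supersets A
  have step2 : ∀ j : Fin n, ∀ l ∈ Finset.univ.erase j,
      ∑ t ∈ ((Finset.univ.erase j).erase l).powerset, G j l t
      = ∑ A ∈ Finset.univ.powerset.filter (fun A : Finset (Fin n) => j ∈ A ∧ l ∈ A),
          G j l ((A.erase j).erase l) := by
    intro j l hl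
    have hjl : j ≠ l := (Finset.ne_of_mem_erase hl).symm
    refine Finset.sum_nbij' (fun t => insert j (insert l t))
      (fun A => (A.erase j).erase l) ?_ ?_ ?_ ?_ ?_
    · intro t ht
      simp only [Finset.mem_filter, Finset.mem_powerset]
      refine ⟨Finset.subset_univ _, Finset.mem_insert_self _ _, ?_⟩
      exact Finset.mem_insert_of_mem (Finset.mem_insert_self _ _)
    · intro A hA
      simp only [Finset.mem_powerset]
      exact Finset.erase_subset_erase l (Finset.erase_subset_erase j (Finset.subset_univ A))
    · intro t ht
      have htE := Finset.mem_powerset.mp ht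
      have hjt : j ∉ insert l t := by
        simp only [Finset.mem_insert]
        push_neg
        exact ⟨hjl, fun h => Finset.notMem_erase j _ (Finset.mem_of_mem_erase (htE h))⟩
      have hlt : l ∉ t := fun h => Finset.notMem_erase l _ (htE h)
      show ((insert j (insert l t)).erase j).erase l = t
      rw [Finset.erase_insert hjt, Finset.erase_insert hlt]
    · intro A hA
      simp only [Finset.mem_filter, Finset.mem_powerset] at hA
      obtain ⟨-, hjA, hlA⟩ := hA
      show insert j (insert l ((A.erase j).erase l)) = A
      rw [Finset.insert_erase (Finset.mem_erase.mpr ⟨fun h => hjl h.symm, hlA⟩),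
        Finset.insert_erase hjA]
    · intro t ht
      have htE := Finset.mem_powerset.mp ht
      have hjt : j ∉ insert l t := by
        simp only [Finset.mem_insert]
        push_neg
        exact ⟨hjl, fun h => Finset.notMem_erase j _ (Finset.mem_of_mem_erase (htE h))⟩
      have hlt : l ∉ t := fun h => Finset.notMem_erase l _ (htE h)
      show G j l t = G j l (((insert j (insert l t)).erase j).erase l)
      rw [Finset.erase_insert hjt, Finset.erase_insert hlt]
  rw [Finset.sum_congr rfl fun j _ => Finset.sum_congr rfl (step2 j)]
  -- Step 3: turn filter into ite and swap sums so A is outermost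
  have step3 : ∀ j : Fin n, ∀ l ∈ Finset.univ.erase j,
      ∑ A ∈ Finset.univ.powerset.filter (fun A : Finset (Fin n) => j ∈ A ∧ l ∈ A),
          G j l ((A.erase j).erase l)
      = ∑ A ∈ (Finset.univ : Finset (Fin n)).powerset,
          if j ∈ A ∧ l ∈ A then G j l ((A.erase j).erase l) else 0 := by
    intro j l _
    rw [Finset.sum_filter]
  rw [Finset.sum_congr rfl fun j _ => Finset.sum_congr rfl (step3 j)]
  rw [Finset.sum_congr rfl fun j _ => Finset.sum_comm, Finset.sum_comm]
  -- Step 4: per A, reduce to sums over A and apply the core identity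
  refine Finset.sum_eq_zero fun A hA => ?_
  have hAu := Finset.mem_powerset.mp hA
  have step4 : ∑ j : Fin n, ∑ l ∈ Finset.univ.erase j,
      (if j ∈ A ∧ l ∈ A then G j l ((A.erase j).erase l) else 0)
      = ∑ j ∈ A, ∑ l ∈ A.erase j, G j l ((A.erase j).erase l) := by
    have hfilter : Finset.univ.filter (fun j : Fin n => j ∈ A) = A := by
      ext m; simp
    calc ∑ j : Fin n, ∑ l ∈ Finset.univ.erase j,
        (if j ∈ A ∧ l ∈ A then G j l ((A.erase j).erase l) else 0)
        = ∑ j : Fin n, (if j ∈ A then ∑ l ∈ A.erase j, G j l ((A.erase j).erase l) else 0) := by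
          refine Finset.sum_congr rfl fun j _ => ?_
          by_cases hj : j ∈ A
          · simp only [hj, true_and, if_true]
            rw [← Finset.sum_filter]
            congr 1
            ext m
            simp only [Finset.mem_filter, Finset.mem_erase, Finset.mem_univ, true_and]
            tauto
          · simp [hj]
      _ = ∑ j ∈ Finset.univ.filter (fun j : Fin n => j ∈ A),
            ∑ l ∈ A.erase j, G j l ((A.erase j).erase l) := by rw [Finset.sum_filter]
      _ = ∑ j ∈ A, ∑ l ∈ A.erase j, G j l ((A.erase j).erase l) := by rw [hfilter]
  rw [step4]
  -- evaluate: constant times core identity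
  set K : ℝ := 2 * (-1 : ℝ) ^ (#A - 2) * c ^ (n - #A) with hK
  have hterm : ∀ j ∈ A, ∀ l ∈ A.erase j, G j l ((A.erase j).erase l)
      = K * (((x j - x l) ^ 3)⁻¹ * ∏ m ∈ (A.erase j).erase l, ((x j - x m) ^ 2)⁻¹) := by
    intro j hj l hl
    have hcard : #((A.erase j).erase l) = #A - 2 := by
      rw [Finset.card_erase_of_mem hl, Finset.card_erase_of_mem hj]
      omega
    have hA2 : 2 ≤ #A := by
      have h1 : 0 < #(A.erase j) := Finset.card_pos.mpr ⟨l, hl⟩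
      have h2 : #(A.erase j) = #A - 1 := Finset.card_erase_of_mem hj
      omega
    have hAn : #A ≤ n := by
      simpa using Finset.card_le_card hAu
    have hexp : n - 2 - (#A - 2) = n - #A := by omega
    have hneg : ∏ m ∈ (A.erase j).erase l, -(((x j - x m) ^ 2)⁻¹)
        = (-1 : ℝ) ^ (#A - 2) * ∏ m ∈ (A.erase j).erase l, ((x j - x m) ^ 2)⁻¹ := by
      rw [← hcard]
      rw [show (fun m => -(((x j - x m) ^ 2)⁻¹)) = fun m => (-1) * ((x j - x m) ^ 2)⁻¹ by
        funext m; ring]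
      rw [Finset.prod_mul_distrib, Finset.prod_const]
    rw [hG]
    simp only []
    rw [hcard, hexp, hneg, hK]
    ring
  calc ∑ j ∈ A, ∑ l ∈ A.erase j, G j l ((A.erase j).erase l)
      = ∑ j ∈ A, ∑ l ∈ A.erase j,
          K * (((x j - x l) ^ 3)⁻¹ * ∏ m ∈ (A.erase j).erase l, ((x j - x m) ^ 2)⁻¹) :=
        Finset.sum_congr rfl fun j hj => Finset.sum_congr rfl fun l hl => hterm j hj l hl
    _ = K * ∑ j ∈ A, ∑ l ∈ A.erase j,
          ((x j - x l) ^ 3)⁻¹ * ∏ m ∈ (A.erase j).erase l, ((x j - x m) ^ 2)⁻¹ := by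
        rw [Finset.mul_sum]
        exact Finset.sum_congr rfl fun j _ => (Finset.mul_sum _ _ _).symm
    _ = 0 := by rw [core_identity (hx.injOn)]; ring
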